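/- arXiv:2310.06510 — 6 statements merged into one kernel-verified Lean document; each statement's English description precedes it below -/
import Mathlib

section
/- The sequence of derivatives (φₙ′) converges uniformly on [0, ε*]; consequently the uniform limit φ of (φₙ) is continuously differentiable on [0, ε*], φ′ is the uniform limit of (φₙ′), and φ′(0) = 1. -/
/-!
The derivative of `φₙ` is the product `∏_{k<n} f′(f⁽ᵏ⁾ x) / a`. Since `f⁽ᵏ⁾ x ≤ (a(1+δ))ᵏ ε*` and
`|f′(y)/a - 1| ≤ C y / a`, the factors differ from `1` by a geometrically decaying amount, so the
partial products stay bounded by `exp (∑ₖ C ε* (a(1+δ))ᵏ / a)` and converge uniformly, to `ψ`.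
Because `φₙ(0) = 0`, we have `φₙ x = ∫₀ˣ φₙ′`, so `φₙ` converges uniformly to `φ x = ∫₀ˣ ψ`, which
is `C¹` with `φ′ = ψ` by the fundamental theorem of calculus; finally `φₙ′(0) = 1` for every `n`.
-/

open Set Filter Finset

theorem exists_tendstoUniformlyOn_of_norm_sub_succ_le {α E : Type*} [NormedAddCommGroup E]
    [CompleteSpace E] {F : ℕ → α → E} {d : ℕ → ℝ} {s : Set α} (hd : Summable d)
    (hF : ∀ n, ∀ x ∈ s, ‖F (n + 1) x - F n x‖ ≤ d n) :
    ∃ G, TendstoUniformlyOn F G atTop s := by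
  have hconst : TendstoUniformlyOn (fun _ : ℕ => F 0) (F 0) atTop s :=
    fun u hu => Eventually.of_forall fun _ _ _ => refl_mem_uniformity hu
  refine ⟨_, (hconst.add (tendstoUniformlyOn_tsum_nat hd hF)).congr
    (Eventually.of_forall fun n x _ => ?_)⟩
  change F 0 x + ∑ k ∈ range n, (F (k + 1) x - F k x) = F n x
  rw [Finset.sum_range_sub (fun k => F k x)]
  abel

theorem exists_tendstoUniformlyOn_prod_range_of_abs_sub_one_le {α : Type*} {u : ℕ → α → ℝ}
    {c : ℕ → ℝ} {s : Set α} (hc : Summable c) (hu : ∀ k, ∀ x ∈ s, |u k x - 1| ≤ c k) :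
    ∃ P, TendstoUniformlyOn (fun n x => ∏ k ∈ range n, u k x) P atTop s := by
  have hbound : ∀ n, ∀ x ∈ s, |∏ k ∈ range n, u k x| ≤ Real.exp (∑' k, c k) := by
    intro n x hx
    have hc0 : ∀ k, 0 ≤ c k := fun k => (abs_nonneg _).trans (hu k x hx)
    calc |∏ k ∈ range n, u k x| = ∏ k ∈ range n, |1 + (u k x - 1)| := by
          rw [Finset.abs_prod]; simp
      _ ≤ ∏ k ∈ range n, (1 + c k) := Finset.prod_le_prod (fun _ _ => abs_nonneg _)
          fun k _ => (abs_add_le _ _).trans (by rw [abs_one]; linarith [hu k x hx])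
      _ ≤ Real.exp (∑ k ∈ range n, c k) := Real.prod_one_add_le_exp_sum _ hc0
      _ ≤ Real.exp (∑' k, c k) := Real.exp_le_exp.2 (hc.sum_le_tsum _ fun k _ => hc0 k)
  refine exists_tendstoUniformlyOn_of_norm_sub_succ_le (hc.mul_left (Real.exp (∑' k, c k)))
    fun n x hx => ?_
  rw [Finset.prod_range_succ, ← mul_sub_one, Real.norm_eq_abs, abs_mul]
  exact mul_le_mul (hbound n x hx) (hu n x hx) (abs_nonneg _) (Real.exp_pos _).le

section UniformLimitOfDerivatives

variable {E : Type*} [NormedAddCommGroup E] [NormedSpace ℝ E] [CompleteSpace E] {a b : ℝ}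

theorem ContinuousOn.hasDerivWithinAt_integral_Icc {ψ : ℝ → E} (hψ : ContinuousOn ψ (Icc a b))
    {x : ℝ} (hx : x ∈ Icc a b) :
    HasDerivWithinAt (fun u => ∫ t in a..u, ψ t) (ψ x) (Icc a b) x := by
  have : Fact (x ∈ Icc a b) := ⟨hx⟩
  exact intervalIntegral.integral_hasDerivWithinAt_right
    ((hψ.mono (uIcc_subset_Icc (left_mem_Icc.2 (hx.1.trans hx.2)) hx)).intervalIntegrable)
    (hψ.stronglyMeasurableAtFilter_nhdsWithin measurableSet_Icc x) (hψ x hx)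

theorem integral_eq_sub_of_hasDerivWithinAt_Icc {F F' : ℝ → E}
    (hF : ∀ x ∈ Icc a b, HasDerivWithinAt F (F' x) (Icc a b) x)
    (hF' : ContinuousOn F' (Icc a b)) {x : ℝ} (hx : x ∈ Icc a b) :
    ∫ t in a..x, F' t = F x - F a := by
  have hsub : Icc a x ⊆ Icc a b := Icc_subset_Icc_right hx.2
  refine intervalIntegral.integral_eq_sub_of_hasDerivAt_of_le hx.1
    (fun t ht => (hF t (hsub ht)).continuousWithinAt.mono hsub) (fun t ht => ?_)
    ((hF'.mono hsub).intervalIntegrable_of_Icc hx.1)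
  exact (hF t (hsub (Ioo_subset_Icc_self ht))).hasDerivAt
    (Icc_mem_nhds ht.1 (ht.2.trans_le hx.2))

theorem tendstoUniformlyOn_integral_of_tendstoUniformlyOn_deriv {F F' : ℕ → ℝ → E} {ψ : ℝ → E}
    (hF : ∀ n, ∀ x ∈ Icc a b, HasDerivWithinAt (F n) (F' n x) (Icc a b) x)
    (hF' : ∀ n, ContinuousOn (F' n) (Icc a b)) (hFa : ∀ n, F n a = 0)
    (hψ : TendstoUniformlyOn F' ψ atTop (Icc a b)) :
    TendstoUniformlyOn F (fun x => ∫ t in a..x, ψ t) atTop (Icc a b) := by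
  have hψc : ContinuousOn ψ (Icc a b) := hψ.continuousOn (Frequently.of_forall hF')
  rw [Metric.tendstoUniformlyOn_iff]
  intro ε hε
  have hε' : 0 < ε / (|b - a| + 1) := by positivity
  filter_upwards [Metric.tendstoUniformlyOn_iff.1 hψ _ hε'] with n hn x hx
  have hsub : Icc a x ⊆ Icc a b := Icc_subset_Icc_right hx.2
  rw [dist_eq_norm, ← sub_zero (F n x), ← hFa n,
    ← integral_eq_sub_of_hasDerivWithinAt_Icc (hF n) (hF' n) hx,
    ← intervalIntegral.integral_sub ((hψc.mono hsub).intervalIntegrable_of_Icc hx.1)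
      (((hF' n).mono hsub).intervalIntegrable_of_Icc hx.1)]
  calc ‖∫ t in a..x, (ψ t - F' n t)‖ ≤ ε / (|b - a| + 1) * |x - a| := by
        refine intervalIntegral.norm_integral_le_of_norm_le_const fun t ht => ?_
        rw [uIoc_of_le hx.1] at ht
        rw [← dist_eq_norm]
        exact (hn t (hsub (Ioc_subset_Icc_self ht))).le
    _ < ε := by
        have hxb : |x - a| ≤ |b - a| :=
          abs_le_abs_of_nonneg (sub_nonneg.2 hx.1) (by linarith [hx.2])
        rw [div_mul_eq_mul_div, div_lt_iff₀ (by positivity)]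
        nlinarith

theorem exists_tendstoUniformlyOn_contDiffOn_of_tendstoUniformlyOn_deriv (hab : a < b)
    {F F' : ℕ → ℝ → E} {ψ : ℝ → E}
    (hF : ∀ n, ∀ x ∈ Icc a b, HasDerivWithinAt (F n) (F' n x) (Icc a b) x)
    (hF' : ∀ n, ContinuousOn (F' n) (Icc a b)) (hFa : ∀ n, F n a = 0)
    (hψ : TendstoUniformlyOn F' ψ atTop (Icc a b)) :
    ∃ φ, TendstoUniformlyOn F φ atTop (Icc a b) ∧ ContDiffOn ℝ 1 φ (Icc a b) ∧
      ∀ x ∈ Icc a b, derivWithin φ (Icc a b) x = ψ x := by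
  have hψc : ContinuousOn ψ (Icc a b) := hψ.continuousOn (Frequently.of_forall hF')
  have hderiv := fun x (hx : x ∈ Icc a b) => hψc.hasDerivWithinAt_integral_Icc hx
  have hderivWithin : ∀ x ∈ Icc a b, derivWithin (fun u => ∫ t in a..u, ψ t) (Icc a b) x = ψ x :=
    fun x hx => (hderiv x hx).derivWithin (uniqueDiffOn_Icc hab x hx)
  refine ⟨_, tendstoUniformlyOn_integral_of_tendstoUniformlyOn_deriv hF hF' hFa hψ, ?_,
    hderivWithin⟩
  rw [contDiffOn_one_iff_derivWithin (uniqueDiffOn_Icc hab)]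
  exact ⟨fun x hx => (hderiv x hx).differentiableWithinAt, hψc.congr hderivWithin⟩

end UniformLimitOfDerivatives

theorem hasDerivWithinAt_iterate {𝕜 : Type*} [NontriviallyNormedField 𝕜] {f g : 𝕜 → 𝕜}
    {s : Set 𝕜} (hs : MapsTo f s s) (hf : ∀ x ∈ s, HasDerivWithinAt f (g x) s x) (n : ℕ)
    {x : 𝕜} (hx : x ∈ s) : HasDerivWithinAt f^[n] (∏ k ∈ range n, g (f^[k] x)) s x := by
  induction n with
  | zero => simpa using hasDerivWithinAt_id x s
  | succ n ih =>
    rw [Function.iterate_succ', Finset.prod_range_succ, mul_comm]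
    exact (hf _ (hs.iterate n hx)).comp x ih (hs.iterate n)

section Contraction

variable {f : ℝ → ℝ} {r ε : ℝ}

theorem mapsTo_Icc_of_le_mul (hr : r ≤ 1) (hf : ∀ x ∈ Icc 0 ε, 0 ≤ f x ∧ f x ≤ r * x) :
    MapsTo f (Icc 0 ε) (Icc 0 ε) :=
  fun x hx => ⟨(hf x hx).1, by nlinarith [(hf x hx).2, hx.1, hx.2]⟩

theorem iterate_le_pow_mul (hr0 : 0 ≤ r) (hr : r ≤ 1)
    (hf : ∀ x ∈ Icc 0 ε, 0 ≤ f x ∧ f x ≤ r * x) (n : ℕ) {x : ℝ} (hx : x ∈ Icc 0 ε) :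
    f^[n] x ≤ r ^ n * x := by
  induction n with
  | zero => simp
  | succ n ih =>
    rw [Function.iterate_succ_apply', pow_succ', mul_assoc]
    exact (hf _ ((mapsTo_Icc_of_le_mul hr hf).iterate n hx)).2.trans
      (mul_le_mul_of_nonneg_left ih hr0)

end Contraction

theorem abs_div_sub_one_le_of_abs_derivWithin_le {g : ℝ → ℝ} {a C ε y : ℝ} (ha : 0 < a)
    (hg : DifferentiableOn ℝ g (Icc 0 ε)) (hC : ∀ x ∈ Icc 0 ε, |derivWithin g (Icc 0 ε) x| ≤ C)
    (hg0 : g 0 = a) (hy : y ∈ Icc 0 ε) : |g y / a - 1| ≤ C / a * y := by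
  rw [div_sub_one ha.ne', abs_div, abs_of_pos ha, div_mul_eq_mul_div,
    div_le_div_iff_of_pos_right ha]
  simpa [hg0, abs_of_nonneg hy.1] using (convex_Icc 0 ε).norm_image_sub_le_of_norm_derivWithin_le
    hg hC (left_mem_Icc.2 (hy.1.trans hy.2)) hy

theorem rescaled_iterates_deriv_converge_general (a δ C εs : ℝ) (f : ℝ → ℝ)
    (ha0 : 0 < a) (hδ : 0 < δ) (hC : 0 < C) (hεs : 0 < εs)
    (hsmall : a * (1 + δ) ^ 2 < 1)
    (hf : ContDiffOn ℝ 2 f (Set.Icc 0 εs))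
    (hf0 : f 0 = 0)
    (hf'0 : derivWithin f (Set.Icc 0 εs) 0 = a)
    (hf'' : ∀ x ∈ Set.Icc 0 εs,
      |derivWithin (derivWithin f (Set.Icc 0 εs)) (Set.Icc 0 εs) x| ≤ C)
    (hf1 : ∀ x ∈ Set.Icc 0 εs, 0 ≤ f x ∧ f x ≤ (1 + δ) * a * x) :
    ∃ φ ψ : ℝ → ℝ,
      TendstoUniformlyOn (fun n x => f^[n] x / a ^ n) φ Filter.atTop (Set.Icc 0 εs) ∧
      TendstoUniformlyOn
        (fun n x => derivWithin (fun y => f^[n] y / a ^ n) (Set.Icc 0 εs) x) ψ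
        Filter.atTop (Set.Icc 0 εs) ∧
      ContDiffOn ℝ 1 φ (Set.Icc 0 εs) ∧
      (∀ x ∈ Set.Icc 0 εs, derivWithin φ (Set.Icc 0 εs) x = ψ x) ∧
      ψ 0 = 1 := by
  set S := Icc 0 εs
  have hr0 : 0 ≤ (1 + δ) * a := by positivity
  have hr1 : (1 + δ) * a < 1 := by nlinarith
  have hmaps : MapsTo f S S := mapsTo_Icc_of_le_mul hr1.le hf1
  set g := derivWithin f S
  have hg : ∀ x ∈ S, HasDerivWithinAt f (g x) S x :=
    fun x hx => (hf.differentiableOn (by norm_num) x hx).hasDerivWithinAt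
  have hgC : ContDiffOn ℝ 1 g S := hf.derivWithin (uniqueDiffOn_Icc hεs) (by norm_num)
  have hfactor : ∀ k, ∀ x ∈ S, |g (f^[k] x) / a - 1| ≤ C / a * εs * ((1 + δ) * a) ^ k :=
    fun k x hx => (abs_div_sub_one_le_of_abs_derivWithin_le ha0
      (hgC.differentiableOn one_ne_zero) hf'' hf'0 (hmaps.iterate k hx)).trans <| by
        rw [mul_assoc, mul_comm εs]
        exact mul_le_mul_of_nonneg_left ((iterate_le_pow_mul hr0 hr1.le hf1 k hx).trans
          (mul_le_mul_of_nonneg_left hx.2 (pow_nonneg hr0 k))) (by positivity)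
  obtain ⟨ψ, hψ⟩ := exists_tendstoUniformlyOn_prod_range_of_abs_sub_one_le
    ((summable_geometric_of_lt_one hr0 hr1).mul_left _) hfactor
  have hderiv : ∀ n, ∀ x ∈ S, HasDerivWithinAt (fun y => f^[n] y / a ^ n)
      (∏ k ∈ range n, g (f^[k] x) / a) S x := by
    intro n x hx
    rw [Finset.prod_div_distrib, Finset.prod_const, Finset.card_range]
    exact (hasDerivWithinAt_iterate hmaps hg n hx).div_const _
  have hderiv_cont : ∀ n, ContinuousOn (fun x => ∏ k ∈ range n, g (f^[k] x) / a) S :=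
    fun n => continuousOn_finsetProd _ fun k _ =>
      (hgC.continuousOn.comp (hf.continuousOn.iterate hmaps k) (hmaps.iterate k)).div_const a
  obtain ⟨φ, hφ, hφC, hφψ⟩ := exists_tendstoUniformlyOn_contDiffOn_of_tendstoUniformlyOn_deriv
    hεs hderiv hderiv_cont (fun n => by simp [Function.iterate_fixed hf0]) hψ
  refine ⟨φ, ψ, hφ, hψ.congr (Eventually.of_forall fun n x hx =>
    ((hderiv n x hx).derivWithin (uniqueDiffOn_Icc hεs x hx)).symm), hφC, hφψ, ?_⟩
  have hprod_zero : ∀ n, ∏ k ∈ range n, g (f^[k] 0) / a = 1 := fun n => by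
    simp [Function.iterate_fixed hf0, hf'0, ha0.ne']
  exact tendsto_nhds_unique (hψ.tendsto_at (left_mem_Icc.2 hεs.le)) (by simp [hprod_zero])

/-- Under the standing hypotheses, the derivatives `φₙ′` of the rescaled
iterates `φₙ(x) = f⁽ⁿ⁾(x)/aⁿ` converge uniformly on `[0,ε*]`; consequently the uniform
limit `φ` of `(φₙ)` is continuously differentiable on `[0,ε*]`, `φ′` is the uniform limit of
`(φₙ′)`, and `φ′(0) = 1`. -/
theorem rescaled_iterates_deriv_converge (a δ C εs : ℝ) (f : ℝ → ℝ)
    (ha0 : 0 < a) (ha1 : a < 1) (hδ : 0 < δ) (hC : 0 < C) (hεs : 0 < εs)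
    (hsmall : a * (1 + δ) ^ 2 < 1)
    (hf : ContDiffOn ℝ 2 f (Set.Icc 0 εs))
    (hf0 : f 0 = 0)
    (hf'0 : derivWithin f (Set.Icc 0 εs) 0 = a)
    (hf'' : ∀ x ∈ Set.Icc 0 εs,
      |derivWithin (derivWithin f (Set.Icc 0 εs)) (Set.Icc 0 εs) x| ≤ C)
    (hf1 : ∀ x ∈ Set.Icc 0 εs, 0 ≤ f x ∧ f x ≤ (1 + δ) * a * x)
    (hf2 : ∀ x ∈ Set.Icc 0 εs, |f x - a * x| ≤ C * x ^ 2) :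
    ∃ φ ψ : ℝ → ℝ,
      TendstoUniformlyOn (fun n x => f^[n] x / a ^ n) φ Filter.atTop (Set.Icc 0 εs) ∧
      TendstoUniformlyOn
        (fun n x => derivWithin (fun y => f^[n] y / a ^ n) (Set.Icc 0 εs) x) ψ
        Filter.atTop (Set.Icc 0 εs) ∧
      ContDiffOn ℝ 1 φ (Set.Icc 0 εs) ∧
      (∀ x ∈ Set.Icc 0 εs, derivWithin φ (Set.Icc 0 εs) x = ψ x) ∧
      ψ 0 = 1 :=
  rescaled_iterates_deriv_converge_general a δ C εs f ha0 hδ hC hεs hsmall hf hf0 hf'0 hf'' hf1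
end

section
/- Let 0 < a < 1, C ≥ 0 and ε > 0 satisfy (C·ε/(1−a))·exp(C·ε/(1−a)) < 1. If f : [0, ε] → ℝ is continuous with f(0) = 0 and |f(a·v) − f(v)| ≤ C·v·|f(v)| for all v ∈ [0, ε], then f(v) = 0 for all v ∈ [0, ε]. -/
/-!
Let `M` be the maximum of `|f|` on `[0, ε]`. Along the orbit `v, a v, a² v, …`, which tends to `0`,
consecutive values of `f` differ by at most `C aⁿ v M`, so the geometric series gives
`|f v| = |f v - f 0| ≤ q M` with `q = C ε / (1 - a)`. Since `x eˣ ≥ e` for `x ≥ 1`, the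
smallness hypothesis forces `q < 1`, so `M ≤ q M` gives `M = 0`.
-/

open Set Filter Topology

lemma lt_one_of_mul_exp_lt_one {x : ℝ} (h : x * Real.exp x < 1) : x < 1 := by
  by_contra! hx
  have : 1 ≤ Real.exp x := Real.one_le_exp (by linarith)
  nlinarith

section Orbit

variable {a ε v : ℝ}

lemma pow_mul_mem_Icc (ha0 : 0 ≤ a) (ha1 : a ≤ 1) (hv : v ∈ Icc 0 ε) (n : ℕ) :
    a ^ n * v ∈ Icc 0 ε :=
  ⟨by have := hv.1; positivity,
    (mul_le_of_le_one_left hv.1 (pow_le_one₀ ha0 ha1)).trans hv.2⟩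

lemma tendsto_apply_pow_mul {f : ℝ → ℝ} (ha0 : 0 ≤ a) (ha1 : a < 1)
    (hf : ContinuousWithinAt f (Icc 0 ε) 0) (hv : v ∈ Icc 0 ε) :
    Tendsto (fun n : ℕ ↦ f (a ^ n * v)) atTop (𝓝 (f 0)) := by
  have hlim : Tendsto (fun n : ℕ ↦ a ^ n * v) atTop (𝓝[Icc 0 ε] 0) :=
    tendsto_nhdsWithin_of_tendsto_nhds_of_eventually_within _
      (by simpa using (tendsto_pow_atTop_nhds_zero_of_lt_one ha0 ha1).mul_const v)
      (Eventually.of_forall (pow_mul_mem_Icc ha0 ha1.le hv))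
  exact hf.tendsto.comp hlim

lemma dist_apply_zero_le {f : ℝ → ℝ} {C M : ℝ} (ha0 : 0 ≤ a) (ha1 : a < 1) (hC : 0 ≤ C)
    (hf : ContinuousWithinAt f (Icc 0 ε) 0)
    (hrel : ∀ w ∈ Icc 0 ε, |f (a * w) - f w| ≤ C * w * |f w|)
    (hM : ∀ w ∈ Icc 0 ε, |f w| ≤ M) (hv : v ∈ Icc 0 ε) :
    dist (f v) (f 0) ≤ C * v * M / (1 - a) := by
  have hstep : ∀ n : ℕ, dist (f (a ^ n * v)) (f (a ^ (n + 1) * v)) ≤ C * v * M * a ^ n := by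
    intro n
    have hmem := pow_mul_mem_Icc ha0 ha1.le hv n
    have hnonneg : 0 ≤ C * (a ^ n * v) := mul_nonneg hC hmem.1
    calc dist (f (a ^ n * v)) (f (a ^ (n + 1) * v))
        = |f (a * (a ^ n * v)) - f (a ^ n * v)| := by
          rw [Real.dist_eq, abs_sub_comm, pow_succ', mul_assoc]
      _ ≤ C * (a ^ n * v) * |f (a ^ n * v)| := hrel _ hmem
      _ ≤ C * (a ^ n * v) * M := mul_le_mul_of_nonneg_left (hM _ hmem) hnonneg
      _ = C * v * M * a ^ n := by ring
  simpa using dist_le_of_le_geometric_of_tendsto₀ a (C * v * M) ha1 hstep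
    (tendsto_apply_pow_mul ha0 ha1 hf hv)

end Orbit

theorem vanishing_lemma_general (a C ε : ℝ) (ha0 : 0 < a) (ha1 : a < 1) (hC : 0 ≤ C)
    (hsmall : (C * ε / (1 - a)) * Real.exp (C * ε / (1 - a)) < 1)
    (f : ℝ → ℝ) (hf : ContinuousOn f (Set.Icc 0 ε)) (hf0 : f 0 = 0)
    (hrel : ∀ v ∈ Set.Icc 0 ε, |f (a * v) - f v| ≤ C * v * |f v|) :
    ∀ v ∈ Set.Icc 0 ε, f v = 0 := by
  intro v hv
  have hq : C * ε / (1 - a) < 1 := lt_one_of_mul_exp_lt_one hsmall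
  obtain ⟨x, hx, hmax⟩ := isCompact_Icc.exists_isMaxOn ⟨v, hv⟩ hf.abs
  set M := |f x|
  have hM : ∀ w ∈ Icc 0 ε, |f w| ≤ M := fun w hw ↦ hmax hw
  have hf0' : ContinuousWithinAt f (Icc 0 ε) 0 := hf 0 ⟨le_rfl, hv.1.trans hv.2⟩
  have hbound : M ≤ C * ε / (1 - a) * M := by
    have h := dist_apply_zero_le ha0.le ha1 hC hf0' hrel hM hx
    rw [hf0, Real.dist_eq, sub_zero] at h
    calc M ≤ C * x * M / (1 - a) := h
      _ ≤ C * ε * M / (1 - a) := by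
          gcongr
          exact hx.2
      _ = C * ε / (1 - a) * M := by ring
  have hM0 : M = 0 := by nlinarith [abs_nonneg (f x)]
  exact abs_nonpos_iff.mp (hM0 ▸ hM v hv)

/-- **vanishing lemma.** If `0 < a < 1`, `C ≥ 0`, `ε > 0` satisfy
`(Cε/(1−a))·exp(Cε/(1−a)) < 1` and `f : [0,ε] → ℝ` is continuous with `f(0) = 0` and
`|f(a·v) − f(v)| ≤ C·v·|f(v)|` for all `v ∈ [0,ε]`, then `f` vanishes identically on `[0,ε]`. -/
theorem vanishing_lemma (a C ε : ℝ) (ha0 : 0 < a) (ha1 : a < 1) (hC : 0 ≤ C) (hε : 0 < ε)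
    (hsmall : (C * ε / (1 - a)) * Real.exp (C * ε / (1 - a)) < 1)
    (f : ℝ → ℝ) (hf : ContinuousOn f (Set.Icc 0 ε)) (hf0 : f 0 = 0)
    (hrel : ∀ v ∈ Set.Icc 0 ε, |f (a * v) - f v| ≤ C * v * |f v|) :
    ∀ v ∈ Set.Icc 0 ε, f v = 0 :=
  vanishing_lemma_general a C ε ha0 ha1 hC hsmall f hf hf0 hrel
end

section
/- For all real numbers k and C with 0 < k < 1 < C there exists a₀ > 0 such that for every a with 0 < a < a₀, the 3×3 real matrix M(a) with rows (a, a, a), (C, k, C), (a, a, k) has three distinct real eigenvalues λ₁ < λ₂ < λ₃ satisfying −1 < λ₁ < 0 < λ₂ < k < λ₃ < 1; in particular M(a) is diagonalizable over ℝ and its spectral radius is strictly less than 1. -/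
open Polynomial Matrix

private lemma im_eval_cp (M : Matrix (Fin 3) (Fin 3) ℝ) (x : ℝ) :
    M.charpoly.eval x = (x • (1 : Matrix (Fin 3) (Fin 3) ℝ) - M).det := by
  rw [Matrix.charpoly, ← Polynomial.coe_evalRingHom, RingHom.map_det]
  congr 1
  ext i j
  by_cases h : i = j <;>
    simp [charmatrix_apply, Matrix.one_apply, h, Matrix.smul_apply]

private lemma im_cp_explicit (a b c d e f g h i : ℝ) :
    (Matrix.charpoly (!![a,b,c;d,e,f;g,h,i] : Matrix (Fin 3) (Fin 3) ℝ)) =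
      X^3 - C (a+e+i) * X^2 + C (a*e+a*i+e*i-b*d-c*g-f*h) * X
        - C (a*e*i - a*f*h - b*d*i + b*f*g + c*d*h - c*e*g) := by
  rw [Matrix.charpoly, Matrix.det_fin_three]
  simp [charmatrix_apply]
  ring

private lemma im_eigenvector (M : Matrix (Fin 3) (Fin 3) ℝ) (l : ℝ)
    (h : M.charpoly.eval l = 0) : ∃ v : Fin 3 → ℝ, v ≠ 0 ∧ M.mulVec v = l • v := by
  rw [im_eval_cp] at h
  obtain ⟨v, hv0, hv⟩ := (Matrix.exists_mulVec_eq_zero_iff).2 h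
  refine ⟨v, hv0, ?_⟩
  rw [Matrix.sub_mulVec, Matrix.smul_mulVec, Matrix.one_mulVec, sub_eq_zero] at hv
  exact hv.symm

/-- For `0 < k < 1 < C` there is `a₀ > 0` such that for all `0 < a < a₀`
the matrix with rows `(a,a,a)`, `(C,k,C)`, `(a,a,k)` has three distinct real eigenvalues
`λ₁ < λ₂ < λ₃` with `−1 < λ₁ < 0 < λ₂ < k < λ₃ < 1`; in particular it is diagonalizable
over `ℝ` (and its spectral radius is `< 1`). -/
theorem iteration_matrix_eigenvalues (k C : ℝ) (hk0 : 0 < k) (hk1 : k < 1) (hC : 1 < C) :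
    ∃ a₀ > 0, ∀ a : ℝ, 0 < a → a < a₀ →
      ∃ l₁ l₂ l₃ : ℝ, l₁ < l₂ ∧ l₂ < l₃ ∧
        -1 < l₁ ∧ l₁ < 0 ∧ 0 < l₂ ∧ l₂ < k ∧ k < l₃ ∧ l₃ < 1 ∧
        (Matrix.charpoly (!![a, a, a; C, k, C; a, a, k] : Matrix (Fin 3) (Fin 3) ℝ)).roots =
          {l₁, l₂, l₃} ∧
        ∃ P : Matrix (Fin 3) (Fin 3) ℝ, IsUnit P.det ∧
          (!![a, a, a; C, k, C; a, a, k] : Matrix (Fin 3) (Fin 3) ℝ) =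
            P * Matrix.diagonal ![l₁, l₂, l₃] * P⁻¹ := by
  have hC0 : (0:ℝ) < C := by linarith
  refine ⟨min k (min ((1-k)^2/(6*C)) (1/(5*C))), ?_, ?_⟩
  · exact lt_min hk0 (lt_min (div_pos (pow_pos (by linarith) 2) (by positivity)) (by positivity))
  intro a ha ha0
  have hak : a < k := lt_of_lt_of_le ha0 (min_le_left _ _)
  have h1 : 6*a*C < (1-k)^2 := by
    have := lt_of_lt_of_le ha0 ((min_le_right _ _).trans (min_le_left _ _))
    rw [lt_div_iff₀ (by positivity)] at this; linarith
  have h2 : 5*a*C < 1 := by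
    have := lt_of_lt_of_le ha0 ((min_le_right _ _).trans (min_le_right _ _))
    rw [lt_div_iff₀ (by positivity)] at this; linarith
  have ha1 : a < 1 := by nlinarith
  set M : Matrix (Fin 3) (Fin 3) ℝ := !![a, a, a; C, k, C; a, a, k] with hM
  set p := M.charpoly with hpdef
  have hpe : p = X^3 - Polynomial.C (a+k+k) * X^2
      + Polynomial.C (a*k+a*k+k*k-a*C-a*a-C*a) * X
      - Polynomial.C (a*k*k - a*C*a - a*C*k + a*C*a + a*C*a - a*k*a) := im_cp_explicit ..
  have ev : ∀ x : ℝ, p.eval x = x^3 - (a+k+k)*x^2 + (a*k+a*k+k*k-a*C-a*a-C*a)*x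
      - (a*k*k - a*C*a - a*C*k + a*C*a + a*C*a - a*k*a) := by
    intro x; rw [hpe]; simp
  have f0 : 0 < p.eval 0 := by
    rw [ev]
    nlinarith [mul_pos (mul_pos ha (sub_pos.2 hak)) (sub_pos.2 (hk1.trans hC))]
  have fk : p.eval k < 0 := by
    rw [ev]
    nlinarith [mul_pos (mul_pos ha hC0) (by linarith : (0:ℝ) < k + a)]
  have f1 : 0 < p.eval 1 := by
    rw [ev]
    nlinarith [mul_pos ha hC0, mul_pos (mul_pos ha ha) hC0, sq_nonneg (1-k),
      mul_pos (mul_pos ha hC0) (by linarith : (0:ℝ) < 1-k),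
      mul_pos (mul_pos ha hC0) (by linarith : (0:ℝ) < 1-a),
      mul_pos (mul_pos ha ha) (by linarith : (0:ℝ) < 1-k)]
  have fm1 : p.eval (-1) < 0 := by
    rw [ev]
    nlinarith [mul_pos ha hC0, mul_pos (mul_pos ha ha) hC0,
      mul_pos (mul_pos ha hC0) (by linarith : (0:ℝ) < 1-k),
      mul_pos (mul_pos ha hC0) (by linarith : (0:ℝ) < 1-a),
      mul_pos (mul_pos ha ha) (by linarith : (0:ℝ) < 1-k)]
  have hcont : Continuous fun x : ℝ => p.eval x := p.continuous
  obtain ⟨l₁, hl₁m, hl₁⟩ := intermediate_value_Ioo (by norm_num : (-1:ℝ) ≤ 0)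
    hcont.continuousOn (show (0:ℝ) ∈ Set.Ioo (p.eval (-1)) (p.eval 0) from ⟨fm1, f0⟩)
  obtain ⟨l₂, hl₂m, hl₂⟩ := intermediate_value_Ioo' hk0.le
    hcont.continuousOn (show (0:ℝ) ∈ Set.Ioo (p.eval k) (p.eval 0) from ⟨fk, f0⟩)
  obtain ⟨l₃, hl₃m, hl₃⟩ := intermediate_value_Ioo hk1.le
    hcont.continuousOn (show (0:ℝ) ∈ Set.Ioo (p.eval k) (p.eval 1) from ⟨fk, f1⟩)
  obtain ⟨hl₁a, hl₁b⟩ := hl₁m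
  obtain ⟨hl₂a, hl₂b⟩ := hl₂m
  obtain ⟨hl₃a, hl₃b⟩ := hl₃m
  have h12 : l₁ < l₂ := hl₁b.trans hl₂a
  have h23 : l₂ < l₃ := hl₂b.trans hl₃a
  have h13 : l₁ < l₃ := h12.trans h23
  refine ⟨l₁, l₂, l₃, h12, h23, hl₁a, hl₁b, hl₂a, hl₂b, hl₃a, hl₃b, ?_, ?_⟩
  · -- roots
    have hmonic : p.Monic := Matrix.charpoly_monic M
    have hp0 : p ≠ 0 := hmonic.ne_zero
    have hdeg : p.natDegree = 3 := by
      simp [hpdef, Matrix.charpoly_natDegree_eq_dim]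
    have hnodup : ({l₁, l₂, l₃} : Multiset ℝ).Nodup := by
      simp only [Multiset.insert_eq_cons, Multiset.nodup_cons, Multiset.mem_cons,
        Multiset.mem_singleton, Multiset.nodup_singleton, and_true]
      push_neg
      exact ⟨⟨h12.ne, h13.ne⟩, h23.ne⟩
    have hsub : ({l₁, l₂, l₃} : Multiset ℝ) ≤ p.roots := by
      rw [Multiset.le_iff_subset hnodup]
      intro x hx
      simp only [Multiset.insert_eq_cons, Multiset.mem_cons, Multiset.mem_singleton] at hx
      rw [Polynomial.mem_roots hp0]
      rcases hx with rfl | rfl | rfl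
      exacts [hl₁, hl₂, hl₃]
    have hcard : Multiset.card p.roots ≤ Multiset.card ({l₁, l₂, l₃} : Multiset ℝ) := by
      have := p.card_roots' 
      simp only [Multiset.insert_eq_cons, Multiset.card_cons, Multiset.card_singleton]
      omega
    exact (Multiset.eq_of_le_of_card_le hsub hcard).symm
  · -- diagonalization
    obtain ⟨v₁, hv₁0, hv₁⟩ := im_eigenvector M l₁ hl₁
    obtain ⟨v₂, hv₂0, hv₂⟩ := im_eigenvector M l₂ hl₂
    obtain ⟨v₃, hv₃0, hv₃⟩ := im_eigenvector M l₃ hl₃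
    have hinj : Function.Injective (![l₁, l₂, l₃] : Fin 3 → ℝ) := by
      intro i j hij
      fin_cases i <;> fin_cases j <;> simp at hij ⊢ <;> linarith
    have hev : ∀ i : Fin 3, Module.End.HasEigenvector (Matrix.mulVecLin M) (![l₁,l₂,l₃] i)
        (![v₁,v₂,v₃] i) := by
      intro i
      fin_cases i
      · exact ⟨Module.End.mem_eigenspace_iff.2 (by simpa using hv₁), by simpa using hv₁0⟩
      · exact ⟨Module.End.mem_eigenspace_iff.2 (by simpa using hv₂), by simpa using hv₂0⟩
      · exact ⟨Module.End.mem_eigenspace_iff.2 (by simpa using hv₃), by simpa using hv₃0⟩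
    have hli : LinearIndependent ℝ ![v₁, v₂, v₃] :=
      Module.End.eigenvectors_linearIndependent' (Matrix.mulVecLin M) _ hinj _ hev
    set P : Matrix (Fin 3) (Fin 3) ℝ := Matrix.of (fun i j => ![v₁,v₂,v₃] j i) with hP
    have hPu : IsUnit P := by
      rw [← Matrix.linearIndependent_cols_iff_isUnit]
      exact hli
    have hPdet : IsUnit P.det := (Matrix.isUnit_iff_isUnit_det P).1 hPu
    refine ⟨P, hPdet, ?_⟩
    have key : ∀ j : Fin 3, M.mulVec (![v₁,v₂,v₃] j) = (![l₁,l₂,l₃] j) • ![v₁,v₂,v₃] j := by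
      intro j; fin_cases j <;> simpa
    have hMP : M * P = P * Matrix.diagonal ![l₁, l₂, l₃] := by
      ext i j
      rw [Matrix.mul_apply, Matrix.mul_diagonal]
      have := congrFun (key j) i
      simp only [Matrix.mulVec, dotProduct, Pi.smul_apply, smul_eq_mul] at this
      simp only [hP, Matrix.of_apply]
      rw [this]; ring
    calc M = M * P * P⁻¹ := by
            rw [Matrix.mul_assoc, Matrix.mul_nonsing_inv P hPdet, Matrix.mul_one]
      _ = P * Matrix.diagonal ![l₁, l₂, l₃] * P⁻¹ := by rw [hMP]
end

section
/- Let (α₊, β₊) ∈ D and (α₋, β₋) ∈ D satisfy J(α₊, β₊, α₋, β₋) = 0 and ρ₊ ≠ ρ₋, where (ρ±, w±) := (ρ̂(α±,β±), ŵ(α±,β±)); set V := (ρ₊w₊ − ρ₋w₋)/(ρ₊ − ρ₋) and η₊ := η(ρ₊). Then the partial derivatives of J in its first two arguments at this point are ∂J/∂α₊ = −((ρ₊ − ρ₋)·ρ₊/(2·η₊))·(c_out(α₊,β₊) − V)² and ∂J/∂β₊ = −((ρ₊ − ρ₋)·ρ₊/(2·η₊))·(V − c_in(α₊,β₊))². In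 particular ∂J/∂α₊ ≠ 0 whenever V ≠ c_out(α₊,β₊), and ∂J/∂β₊ ≠ 0 whenever V ≠ c_in(α₊,β₊). -/
/-!
On `D` the Riemann invariants are affine: `F ∘ ρ̂ = (α + β)/2` and `ŵ = (α - β)/2`. Since
`F' = η/ρ`, differentiating the first identity gives `∂ρ̂/∂α = ∂ρ̂/∂β = ρ̂/(2η)`, while
`∂ŵ/∂α = -∂ŵ/∂β = 1/2`. By the chain rule, the derivative of `J` in a direction `v` is then a
polynomial in `ρ₊, w₊, η₊` and the jumps; on the zero set of `J` it collapses to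
`-([ρ] ρ₊/(2η₊)) · (v₁ (c_out - V)² + v₂ (V - c_in)²)`.
-/

open Filter Topology

def jump (p : ℝ → ℝ) (rp up rm um : ℝ) : ℝ :=
  (rp * up - rm * um) ^ 2 - ((rp * up ^ 2 + p rp) - (rm * um ^ 2 + p rm)) * (rp - rm)

theorem hasDerivAt_of_hasDerivAt_comp {f g : ℝ → ℝ} {x f' c : ℝ} (hf : HasDerivAt f f' (g x))
    (hf' : f' ≠ 0) (hg : DifferentiableAt ℝ g x) (hfg : HasDerivAt (fun s => f (g s)) c x) :
    HasDerivAt g (c / f') x := by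
  have hc : f' * deriv g x = c := (hf.comp x hg.hasDerivAt).unique hfg
  rw [← hc, mul_div_cancel_left₀ _ hf']
  exact hg.hasDerivAt

theorem hasDerivAt_jump {p ρ w : ℝ → ℝ} {ρ' w' p' t : ℝ} (r u : ℝ) (hρ : HasDerivAt ρ ρ' t)
    (hw : HasDerivAt w w' t) (hp : HasDerivAt p p' (ρ t)) :
    HasDerivAt (fun s => jump p (ρ s) (w s) r u)
      (2 * (ρ t * w t - r * u) * (ρ' * w t + ρ t * w') -
        ((ρ' * w t ^ 2 + 2 * ρ t * w t * w' + p' * ρ') * (ρ t - r) +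
          ((ρ t * w t ^ 2 + p (ρ t)) - (r * u ^ 2 + p r)) * ρ')) t := by
  have h := (((hρ.mul hw).sub_const (r * u)).pow 2).sub
    ((((hρ.mul (hw.pow 2)).add (hp.comp t hρ)).sub_const (r * u ^ 2 + p r)).mul (hρ.sub_const r))
  refine h.congr_deriv ?_
  simp only [Pi.add_apply, Pi.mul_apply, Pi.pow_apply, Function.comp_apply]
  ring

/-- On `J = 0` the jump of `ρw² + p` equals `V · [ρw]`, and the chain-rule expression
becomes a perfect square in each Riemann-invariant direction. -/
theorem jump_deriv_eq_of_jump_eq_zero {p : ℝ → ℝ} {rp up rm um η v₁ v₂ : ℝ} (hη : η ≠ 0)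
    (hr : rp ≠ rm) (h0 : jump p rp up rm um = 0) :
    let ρ' := (v₁ + v₂) * rp / (2 * η)
    let w' := (v₁ - v₂) / 2
    let V := (rp * up - rm * um) / (rp - rm)
    2 * (rp * up - rm * um) * (ρ' * up + rp * w') -
        ((ρ' * up ^ 2 + 2 * rp * up * w' + η ^ 2 * ρ') * (rp - rm) +
          ((rp * up ^ 2 + p rp) - (rm * um ^ 2 + p rm)) * ρ') =
      -((rp - rm) * rp / (2 * η)) * (v₁ * ((up + η) - V) ^ 2 + v₂ * (V - (up - η)) ^ 2) := by
  intro ρ' w' V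
  have hA : rp - rm ≠ 0 := sub_ne_zero.mpr hr
  have hP : (rp * up ^ 2 + p rp) - (rm * um ^ 2 + p rm) =
      (rp * up - rm * um) ^ 2 / (rp - rm) := by
    rw [eq_div_iff hA]; unfold jump at h0; linarith
  simp only [ρ', w', V, hP]
  field_simp
  ring

section RiemannInvariants

variable {F : ℝ → ℝ} {D : Set (ℝ × ℝ)} {ρhat what : ℝ × ℝ → ℝ} {γ : ℝ → ℝ × ℝ} {v : ℝ × ℝ}
  {t : ℝ}

theorem hasDerivAt_F_ρhat_comp_and_what_comp (hD : IsOpen D)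
    (hplus : ∀ q ∈ D, F (ρhat q) + what q = q.1) (hminus : ∀ q ∈ D, F (ρhat q) - what q = q.2)
    (hγ : HasDerivAt γ v t) (ht : γ t ∈ D) :
    HasDerivAt (fun s => F (ρhat (γ s))) ((v.1 + v.2) / 2) t ∧
      HasDerivAt (fun s => what (γ s)) ((v.1 - v.2) / 2) t := by
  have hfst : HasDerivAt (fun s => (γ s).1) v.1 t := by
    exact hasFDerivAt_fst.comp_hasDerivAt t hγ
  have hsnd : HasDerivAt (fun s => (γ s).2) v.2 t := by
    exact hasFDerivAt_snd.comp_hasDerivAt t hγ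
  have hmem : ∀ᶠ s in 𝓝 t, γ s ∈ D := hγ.continuousAt.preimage_mem_nhds (hD.mem_nhds ht)
  constructor
  · refine ((hfst.add hsnd).div_const 2).congr_of_eventuallyEq ?_
    filter_upwards [hmem] with s hs
    dsimp only [Pi.add_apply]
    linarith [hplus _ hs, hminus _ hs]
  · refine ((hfst.sub hsnd).div_const 2).congr_of_eventuallyEq ?_
    filter_upwards [hmem] with s hs
    dsimp only [Pi.sub_apply]
    linarith [hplus _ hs, hminus _ hs]

theorem hasDerivAt_ρhat_comp (hD : IsOpen D) (hplus : ∀ q ∈ D, F (ρhat q) + what q = q.1)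
    (hminus : ∀ q ∈ D, F (ρhat q) - what q = q.2) (hγ : HasDerivAt γ v t) (ht : γ t ∈ D)
    (hρ : DifferentiableAt ℝ ρhat (γ t)) {η : ℝ} (hη : η ≠ 0) (hρ₀ : ρhat (γ t) ≠ 0)
    (hF : HasDerivAt F (η / ρhat (γ t)) (ρhat (γ t))) :
    HasDerivAt (fun s => ρhat (γ s)) ((v.1 + v.2) * ρhat (γ t) / (2 * η)) t := by
  have h := hasDerivAt_of_hasDerivAt_comp hF (div_ne_zero hη hρ₀)
    (hρ.hasFDerivAt.comp_hasDerivAt t hγ).differentiableAt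
    (hasDerivAt_F_ρhat_comp_and_what_comp hD hplus hminus hγ ht).1
  refine h.congr_deriv ?_
  field_simp

theorem hasDerivAt_jump_comp {p : ℝ → ℝ} {q : ℝ × ℝ} (hD : IsOpen D)
    (hplus : ∀ q ∈ D, F (ρhat q) + what q = q.1) (hminus : ∀ q ∈ D, F (ρhat q) - what q = q.2)
    (hγ : HasDerivAt γ v t) (hγt : γ t = q) (hq : q ∈ D) (hρ : DifferentiableAt ℝ ρhat q)
    {η : ℝ} (hη : η ≠ 0) (hρ₀ : ρhat q ≠ 0) (hF : HasDerivAt F (η / ρhat q) (ρhat q))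
    (hp : HasDerivAt p (η ^ 2) (ρhat q)) (qm : ℝ × ℝ)
    (h0 : jump p (ρhat q) (what q) (ρhat qm) (what qm) = 0) (hne : ρhat q ≠ ρhat qm) :
    HasDerivAt (fun s => jump p (ρhat (γ s)) (what (γ s)) (ρhat qm) (what qm))
      (-((ρhat q - ρhat qm) * ρhat q / (2 * η)) *
        (v.1 * ((what q + η) - (ρhat q * what q - ρhat qm * what qm) / (ρhat q - ρhat qm)) ^ 2 +
          v.2 * ((ρhat q * what q - ρhat qm * what qm) / (ρhat q - ρhat qm) - (what q - η)) ^ 2))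
      t := by
  subst hγt
  have h := hasDerivAt_jump (ρhat qm) (what qm)
    (hasDerivAt_ρhat_comp hD hplus hminus hγ hq hρ hη hρ₀ hF)
    (hasDerivAt_F_ρhat_comp_and_what_comp hD hplus hminus hγ hq).2 hp
  exact h.congr_deriv (jump_deriv_eq_of_jump_eq_zero hη hne h0)

end RiemannInvariants

theorem jump_function_partial_derivatives_general
    (p F : ℝ → ℝ) (D : Set (ℝ × ℝ)) (ρhat what : ℝ × ℝ → ℝ)
    (hp' : ∀ s ∈ Set.Ioi (0 : ℝ), 0 < deriv p s)
    (hF : ∀ s ∈ Set.Ioi (0 : ℝ), HasDerivAt F (Real.sqrt (deriv p s) / s) s)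
    (hD : IsOpen D)
    (hρ : ContDiffOn ℝ (⊤ : ℕ∞) ρhat D)
    (hρpos : ∀ q ∈ D, 0 < ρhat q)
    (hplus : ∀ q ∈ D, F (ρhat q) + what q = q.1)
    (hminus : ∀ q ∈ D, F (ρhat q) - what q = q.2)
    (J : ℝ × ℝ → ℝ × ℝ → ℝ)
    (hJ : ∀ qp qm, J qp qm =
      (ρhat qp * what qp - ρhat qm * what qm) ^ 2 -
        ((ρhat qp * what qp ^ 2 + p (ρhat qp)) - (ρhat qm * what qm ^ 2 + p (ρhat qm))) *
          (ρhat qp - ρhat qm))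
    (qp qm : ℝ × ℝ) (hqp : qp ∈ D)
    (hJ0 : J qp qm = 0) (hne : ρhat qp ≠ ρhat qm) :
    (deriv (fun s => J (s, qp.2) qm) qp.1 =
        -((ρhat qp - ρhat qm) * ρhat qp / (2 * Real.sqrt (deriv p (ρhat qp)))) *
          ((what qp + Real.sqrt (deriv p (ρhat qp))) -
            (ρhat qp * what qp - ρhat qm * what qm) / (ρhat qp - ρhat qm)) ^ 2) ∧
    (deriv (fun s => J (qp.1, s) qm) qp.2 =
        -((ρhat qp - ρhat qm) * ρhat qp / (2 * Real.sqrt (deriv p (ρhat qp)))) *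
          ((ρhat qp * what qp - ρhat qm * what qm) / (ρhat qp - ρhat qm) -
            (what qp - Real.sqrt (deriv p (ρhat qp)))) ^ 2) ∧
    ((ρhat qp * what qp - ρhat qm * what qm) / (ρhat qp - ρhat qm) ≠
        what qp + Real.sqrt (deriv p (ρhat qp)) →
      deriv (fun s => J (s, qp.2) qm) qp.1 ≠ 0) ∧
    ((ρhat qp * what qp - ρhat qm * what qm) / (ρhat qp - ρhat qm) ≠
        what qp - Real.sqrt (deriv p (ρhat qp)) →
      deriv (fun s => J (qp.1, s) qm) qp.2 ≠ 0) := by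
  have hρ₀ : 0 < ρhat qp := hρpos qp hqp
  have hP : 0 < deriv p (ρhat qp) := hp' _ hρ₀
  have hη : Real.sqrt (deriv p (ρhat qp)) ≠ 0 := (Real.sqrt_pos.mpr hP).ne'
  have hpη : HasDerivAt p (Real.sqrt (deriv p (ρhat qp)) ^ 2) (ρhat qp) := by
    rw [Real.sq_sqrt hP.le]
    exact (differentiableAt_of_deriv_ne_zero hP.ne').hasDerivAt
  have hρdiff : DifferentiableAt ℝ ρhat qp :=
    (hρ.contDiffAt (hD.mem_nhds hqp)).differentiableAt (by simp)
  have h0 : jump p (ρhat qp) (what qp) (ρhat qm) (what qm) = 0 := (hJ qp qm).symm.trans hJ0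
  have key {γ : ℝ → ℝ × ℝ} {v : ℝ × ℝ} {t : ℝ} (hγ : HasDerivAt γ v t) (hγt : γ t = qp) :=
    (funext fun s => (hJ (γ s) qm).symm) ▸
      hasDerivAt_jump_comp hD hplus hminus hγ hγt hqp hρdiff hη hρ₀.ne' (hF _ hρ₀) hpη qm h0 hne
  have hα := key ((hasDerivAt_id qp.1).prodMk (hasDerivAt_const qp.1 qp.2)) rfl
  have hβ := key ((hasDerivAt_const qp.2 qp.1).prodMk (hasDerivAt_id qp.2)) rfl
  simp only [id_eq, one_mul, zero_mul, add_zero, zero_add] at hα hβ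
  have hc : -((ρhat qp - ρhat qm) * ρhat qp / (2 * Real.sqrt (deriv p (ρhat qp)))) ≠ 0 :=
    neg_ne_zero.mpr <|
      div_ne_zero (mul_ne_zero (sub_ne_zero.mpr hne) hρ₀.ne') (mul_ne_zero two_ne_zero hη)
  refine ⟨hα.deriv, hβ.deriv, fun hV => ?_, fun hV => ?_⟩
  · rw [hα.deriv]
    exact mul_ne_zero hc (pow_ne_zero 2 (sub_ne_zero.mpr hV.symm))
  · rw [hβ.deriv]
    exact mul_ne_zero hc (pow_ne_zero 2 (sub_ne_zero.mpr hV))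

/-- At a point `(α₊,β₊,α₋,β₋)` of the zero set of the jump function `J`
with `ρ₊ ≠ ρ₋`, and with shock speed `V = [ρw]/[ρ]`, the partial derivatives of `J` in its
first two arguments are
`∂J/∂α₊ = −((ρ₊−ρ₋)·ρ₊/(2η₊))·(c_out(α₊,β₊) − V)²` and
`∂J/∂β₊ = −((ρ₊−ρ₋)·ρ₊/(2η₊))·(V − c_in(α₊,β₊))²`; in particular they are nonzero when
`V ≠ c_out(α₊,β₊)` resp. `V ≠ c_in(α₊,β₊)`. -/
theorem jump_function_partial_derivatives
    (p F : ℝ → ℝ) (D : Set (ℝ × ℝ)) (ρhat what : ℝ × ℝ → ℝ)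
    (hp : ContDiffOn ℝ (⊤ : ℕ∞) p (Set.Ioi 0))
    (hp' : ∀ s ∈ Set.Ioi (0 : ℝ), 0 < deriv p s)
    (hF : ∀ s ∈ Set.Ioi (0 : ℝ), HasDerivAt F (Real.sqrt (deriv p s) / s) s)
    (hD : IsOpen D)
    (hρ : ContDiffOn ℝ (⊤ : ℕ∞) ρhat D) (hw : ContDiffOn ℝ (⊤ : ℕ∞) what D)
    (hρpos : ∀ q ∈ D, 0 < ρhat q)
    (hplus : ∀ q ∈ D, F (ρhat q) + what q = q.1)
    (hminus : ∀ q ∈ D, F (ρhat q) - what q = q.2)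
    (J : ℝ × ℝ → ℝ × ℝ → ℝ)
    (hJ : ∀ qp qm, J qp qm =
      (ρhat qp * what qp - ρhat qm * what qm) ^ 2 -
        ((ρhat qp * what qp ^ 2 + p (ρhat qp)) - (ρhat qm * what qm ^ 2 + p (ρhat qm))) *
          (ρhat qp - ρhat qm))
    (qp qm : ℝ × ℝ) (hqp : qp ∈ D) (hqm : qm ∈ D)
    (hJ0 : J qp qm = 0) (hne : ρhat qp ≠ ρhat qm) :
    (deriv (fun s => J (s, qp.2) qm) qp.1 =
        -((ρhat qp - ρhat qm) * ρhat qp / (2 * Real.sqrt (deriv p (ρhat qp)))) *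
          ((what qp + Real.sqrt (deriv p (ρhat qp))) -
            (ρhat qp * what qp - ρhat qm * what qm) / (ρhat qp - ρhat qm)) ^ 2) ∧
    (deriv (fun s => J (qp.1, s) qm) qp.2 =
        -((ρhat qp - ρhat qm) * ρhat qp / (2 * Real.sqrt (deriv p (ρhat qp)))) *
          ((ρhat qp * what qp - ρhat qm * what qm) / (ρhat qp - ρhat qm) -
            (what qp - Real.sqrt (deriv p (ρhat qp)))) ^ 2) ∧
    ((ρhat qp * what qp - ρhat qm * what qm) / (ρhat qp - ρhat qm) ≠
        what qp + Real.sqrt (deriv p (ρhat qp)) →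
      deriv (fun s => J (s, qp.2) qm) qp.1 ≠ 0) ∧
    ((ρhat qp * what qp - ρhat qm * what qm) / (ρhat qp - ρhat qm) ≠
        what qp - Real.sqrt (deriv p (ρhat qp)) →
      deriv (fun s => J (qp.1, s) qm) qp.2 ≠ 0) :=
  jump_function_partial_derivatives_general p F D ρhat what hp' hF hD hρ hρpos hplus hminus J hJ qp
    qm hqp hJ0 hne
end

section
/- If in addition c_in and c_out are nowhere zero on Ω and c_in(q) ≠ c_out(q) for every q ∈ Ω, then at every point of Ω: ∂²r/∂u∂v = (1/(c_out − c_in))·((c_out/c_in)·(∂c_in/∂v)·(∂r/∂u) − (c_in/c_out)·(∂c_out/∂u)·(∂r/∂v)). -/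
/-!
Differentiating `∂r/∂v = c_out·∂t/∂v` in `u` and `∂r/∂u = c_in·∂t/∂u` in `v`, and using the
symmetry of the second derivatives of `r` and `t`, gives two expressions for `∂²r/∂u∂v` that
both involve the unknown `∂²t/∂u∂v`. Since `c_in ≠ c_out` this unknown can be eliminated, and
`∂t/∂u = (∂r/∂u)/c_in`, `∂t/∂v = (∂r/∂v)/c_out` turn the result into a formula in `r` alone.
-/

open Filter Topology

section DirectionalDerivative

variable {E F : Type*} [NormedAddCommGroup E] [NormedSpace ℝ E]
  [NormedAddCommGroup F] [NormedSpace ℝ F]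

lemma fderiv_fderiv_apply_const {f : E → F} {q : E} (hf : DifferentiableAt ℝ (fderiv ℝ f) q)
    (a b : E) :
    fderiv ℝ (fun p => fderiv ℝ f p a) q b = fderiv ℝ (fderiv ℝ f) q b a := by
  simp [fderiv_clm_apply hf (differentiableAt_const a)]

lemma ContDiffAt.fderiv_fderiv_apply_comm {f : E → F} {q : E} (hf : ContDiffAt ℝ 2 f q)
    (a b : E) :
    fderiv ℝ (fun p => fderiv ℝ f p a) q b = fderiv ℝ (fun p => fderiv ℝ f p b) q a := by
  have hf' : DifferentiableAt ℝ (fderiv ℝ f) q :=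
    (hf.fderiv_right (m := 1) le_rfl).differentiableAt one_ne_zero
  rw [fderiv_fderiv_apply_const hf', fderiv_fderiv_apply_const hf']
  exact hf.isSymmSndFDerivAt (by simp) b a

lemma fderiv_fderiv_apply_of_eventually_eq_mul {r t c : E → ℝ} {q a b : E}
    (h : ∀ᶠ p in 𝓝 q, fderiv ℝ r p a = c p * fderiv ℝ t p a)
    (hc : DifferentiableAt ℝ c q) (ht : DifferentiableAt ℝ (fun p => fderiv ℝ t p a) q) :
    fderiv ℝ (fun p => fderiv ℝ r p a) q b =
      fderiv ℝ c q b * fderiv ℝ t q a + c q * fderiv ℝ (fun p => fderiv ℝ t p a) q b := by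
  rw [EventuallyEq.fderiv_eq h, fderiv_fun_mul hc ht]
  simp only [add_apply, smul_apply, smul_eq_mul]
  ring

end DirectionalDerivative

lemma eq_of_characteristic_relations {cin cout dcin dcout ru rv tu tv M D : ℝ}
    (hcin : cin ≠ 0) (hcout : cout ≠ 0) (hne : cin ≠ cout)
    (hru : ru = cin * tu) (hrv : rv = cout * tv)
    (hu : D = dcin * tu + cin * M) (hv : D = dcout * tv + cout * M) :
    D = 1 / (cout - cin) * (cout / cin * dcin * ru - cin / cout * dcout * rv) := by
  have hsub : cout - cin ≠ 0 := sub_ne_zero.mpr hne.symm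
  subst hru hrv
  field_simp
  linear_combination cout * hu - cin * hv

/-- For a characteristic system `∂r/∂u = c_in·∂t/∂u`,
`∂r/∂v = c_out·∂t/∂v` on an open set `Ω ⊆ ℝ²` with `c_in, c_out` nowhere zero and
`c_in ≠ c_out` on `Ω`, the mixed second derivative of `r` satisfies
`∂²r/∂u∂v = (1/(c_out−c_in))·((c_out/c_in)·(∂c_in/∂v)·(∂r/∂u) −
(c_in/c_out)·(∂c_out/∂u)·(∂r/∂v))`. -/
theorem mixed_derivative_r
    (Ω : Set (ℝ × ℝ)) (hΩ : IsOpen Ω)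
    (t r cin cout : ℝ × ℝ → ℝ)
    (ht : ContDiffOn ℝ 2 t Ω) (hr : ContDiffOn ℝ 2 r Ω)
    (hcin : ∀ q ∈ Ω, DifferentiableAt ℝ cin q)
    (hcout : ∀ q ∈ Ω, DifferentiableAt ℝ cout q)
    (hchar_u : ∀ q ∈ Ω, fderiv ℝ r q (1, 0) = cin q * fderiv ℝ t q (1, 0))
    (hchar_v : ∀ q ∈ Ω, fderiv ℝ r q (0, 1) = cout q * fderiv ℝ t q (0, 1))
    (hcin0 : ∀ q ∈ Ω, cin q ≠ 0) (hcout0 : ∀ q ∈ Ω, cout q ≠ 0)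
    (hne : ∀ q ∈ Ω, cin q ≠ cout q) :
    ∀ q ∈ Ω,
      fderiv ℝ (fun q => fderiv ℝ r q (0, 1)) q (1, 0) =
        (1 / (cout q - cin q)) *
          ((cout q / cin q) * fderiv ℝ cin q (0, 1) * fderiv ℝ r q (1, 0) -
            (cin q / cout q) * fderiv ℝ cout q (1, 0) * fderiv ℝ r q (0, 1)) := by
  intro q hq
  have hΩq : Ω ∈ 𝓝 q := hΩ.mem_nhds hq
  have htq : ContDiffAt ℝ 2 t q := ht.contDiffAt hΩq
  have ht' : ∀ a, DifferentiableAt ℝ (fun p => fderiv ℝ t p a) q := fun a =>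
    ((htq.fderiv_right (m := 1) le_rfl).differentiableAt one_ne_zero).clm_apply
      (differentiableAt_const a)
  have hv := fderiv_fderiv_apply_of_eventually_eq_mul (b := (1, 0))
    (mem_of_superset hΩq hchar_v) (hcout q hq) (ht' _)
  have hu := fderiv_fderiv_apply_of_eventually_eq_mul (b := (0, 1))
    (mem_of_superset hΩq hchar_u) (hcin q hq) (ht' _)
  rw [← (hr.contDiffAt hΩq).fderiv_fderiv_apply_comm, ← htq.fderiv_fderiv_apply_comm] at hu
  exact eq_of_characteristic_relations (hcin0 q hq) (hcout0 q hq) (hne q hq)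
    (hchar_u q hq) (hchar_v q hq) hu hv
end

section
/- Let f : ℝ → ℝ and let x be a nonzero vector in three-dimensional Euclidean space. If f is differentiable at ‖x‖, then the radial vector field X(y) := f(‖y‖)·y/‖y‖ is differentiable at x and its divergence at x (the trace of its Fréchet derivative) equals f′(‖x‖) + 2·f(‖x‖)/‖x‖. -/
/-!
Write the field as `g(‖y‖) • y` with `g s = f s / s`. Away from the origin the norm has derivative
`⟪x, ·⟫ / ‖x‖`, so by the product rule the derivative at `x` is `g(‖x‖) • id` plus the rank-one map
`v ↦ g'(‖x‖) ⟪x, v⟫ / ‖x‖ • x`, whose trace is `g'(‖x‖) ‖x‖`. In dimension `n` the divergence is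
therefore `n g(‖x‖) + g'(‖x‖) ‖x‖`, and `g' r = f' r / r - f r / r²` turns this into
`f'(‖x‖) + (n - 1) f(‖x‖) / ‖x‖`.
-/

open Module

variable {E : Type*} [NormedAddCommGroup E] [InnerProductSpace ℝ E]

theorem hasFDerivAt_norm {x : E} (hx : x ≠ 0) :
    HasFDerivAt (‖·‖) (‖x‖⁻¹ • innerSL ℝ x) x := by
  have hsqrt := (Real.hasDerivAt_sqrt (by positivity : ‖x‖ ^ 2 ≠ 0)).comp_hasFDerivAt x
    (hasStrictFDerivAt_norm_sq x).hasFDerivAt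
  simp only [Function.comp_def, Real.sqrt_sq (norm_nonneg _)] at hsqrt
  refine hsqrt.congr_fderiv ?_
  rw [smul_comm, ← smul_assoc, nsmul_eq_mul]
  congr 1
  field_simp
  norm_num

theorem trace_smul_id_add_smulRight [FiniteDimensional ℝ E] (c : ℝ) (φ : E →L[ℝ] ℝ) (v : E) :
    LinearMap.trace ℝ E (c • ContinuousLinearMap.id ℝ E + φ.smulRight v).toLinearMap =
      c * finrank ℝ E + φ v := by
  have : (c • ContinuousLinearMap.id ℝ E + φ.smulRight v).toLinearMap =
      c • LinearMap.id + (φ : E →ₗ[ℝ] ℝ).smulRight v := rfl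
  rw [this, map_add, map_smul, LinearMap.trace_id, LinearMap.trace_smulRight, smul_eq_mul]
  rfl

theorem HasDerivAt.hasFDerivAt_radial {g : ℝ → ℝ} {g' : ℝ} {x : E} (hx : x ≠ 0)
    (hg : HasDerivAt g g' ‖x‖) :
    HasFDerivAt (fun y : E => g ‖y‖ • y)
      (g ‖x‖ • ContinuousLinearMap.id ℝ E + (g' • ‖x‖⁻¹ • innerSL ℝ x).smulRight x) x :=
  (hg.comp_hasFDerivAt x (hasFDerivAt_norm hx)).smul (hasFDerivAt_id x)

theorem HasDerivAt.trace_fderiv_radial [FiniteDimensional ℝ E] {g : ℝ → ℝ} {g' : ℝ} {x : E}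
    (hx : x ≠ 0) (hg : HasDerivAt g g' ‖x‖) :
    LinearMap.trace ℝ E (fderiv ℝ (fun y : E => g ‖y‖ • y) x).toLinearMap =
      finrank ℝ E * g ‖x‖ + g' * ‖x‖ := by
  have hr : ‖x‖ ≠ 0 := norm_ne_zero_iff.mpr hx
  rw [(hg.hasFDerivAt_radial hx).fderiv, trace_smul_id_add_smulRight]
  simp only [FunLike.coe_smul, Pi.smul_apply, innerSL_apply_apply, real_inner_self_eq_norm_sq,
    smul_eq_mul]
  field_simp

theorem HasDerivAt.div_id {f : ℝ → ℝ} {f' r : ℝ} (hf : HasDerivAt f f' r) (hr : r ≠ 0) :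
    HasDerivAt (fun s => f s / s) (f' / r - f r / r ^ 2) r := by
  have h : HasDerivAt (fun s => f s / s) ((f' * r - f r * 1) / r ^ 2) r :=
    hf.div (hasDerivAt_id' r) hr
  exact h.congr_deriv (by field_simp)

theorem HasDerivAt.trace_fderiv_div_norm_smul_self [FiniteDimensional ℝ E] {f : ℝ → ℝ} {f' : ℝ}
    {x : E} (hx : x ≠ 0) (hf : HasDerivAt f f' ‖x‖) :
    LinearMap.trace ℝ E (fderiv ℝ (fun y : E => (f ‖y‖ / ‖y‖) • y) x).toLinearMap =
      f' + (finrank ℝ E - 1) * f ‖x‖ / ‖x‖ := by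
  have hr : ‖x‖ ≠ 0 := norm_ne_zero_iff.mpr hx
  rw [(hf.div_id hr).trace_fderiv_radial hx]
  field_simp
  ring

/-- For `f : ℝ → ℝ` differentiable at `‖x‖` and `x ≠ 0` in
three-dimensional Euclidean space, the radial vector field `X(y) = f(‖y‖)·y/‖y‖` is
differentiable at `x` and its divergence (the trace of its Fréchet derivative) at `x`
equals `f′(‖x‖) + 2·f(‖x‖)/‖x‖`. -/
theorem divergence_radial_field (f : ℝ → ℝ) (x : EuclideanSpace ℝ (Fin 3))
    (hx : x ≠ 0) (hf : DifferentiableAt ℝ f ‖x‖) :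
    DifferentiableAt ℝ (fun y : EuclideanSpace ℝ (Fin 3) => (f ‖y‖ / ‖y‖) • y) x ∧
    LinearMap.trace ℝ (EuclideanSpace ℝ (Fin 3))
        (fderiv ℝ (fun y : EuclideanSpace ℝ (Fin 3) => (f ‖y‖ / ‖y‖) • y) x).toLinearMap =
      deriv f ‖x‖ + 2 * f ‖x‖ / ‖x‖ := by
  have hX := (hf.hasDerivAt.div_id (norm_ne_zero_iff.mpr hx)).hasFDerivAt_radial hx
  refine ⟨hX.differentiableAt, ?_⟩
  rw [hf.hasDerivAt.trace_fderiv_div_norm_smul_self hx, finrank_euclideanSpace_fin]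
  norm_num
end
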